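/- Let δ ∈ (0, π/2), let c ∈ ℂ, and let F : ℂ → ℂ be entire with constants A, C > 0 such that |F(λ)| ≤ C exp(A·|λ|^{1/2}) for all λ ∈ ℂ. Suppose that F(ρ²) → c as |ρ| → ∞ with ρ ∈ Λ_δ, i.e., for every ε > 0 there is R > 0 such that |F(ρ²) − c| ≤ ε whenever ρ ∈ ℂ, δ ≤ arg ρ ≤ π − δ, and |ρ| ≥ R. Then F(λ) = c for all λ ∈ ℂ. -/

import Mathlib

/-!
On the sector `Λ_δ` the function `ρ ↦ F (ρ ^ 2)` tends to `c`, so it is bounded there; hence `F`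
is bounded on `{λ : 2δ ≤ |arg λ|}`, the set of squares of `Λ_δ`. The remaining sector
`|arg λ| ≤ 2δ` becomes, in the variable `w = log λ`, the strip `|Im w| ≤ 2δ`, on which `F ∘ exp`
grows like `exp (A e^{|Re w| / 2})`; since `1/2 < π / 4δ`, Phragmén–Lindelöf bounds `F` there by
its bound on the boundary rays.
Thus `F` is bounded, constant by Liouville, and the constant is `c`.
-/

open Complex Filter Asymptotics

theorem Continuous.exists_forall_norm_le_of_norm_le_off_ball {X E : Type*} [NormedAddCommGroup X]
    [ProperSpace X] [SeminormedAddCommGroup E] {f : X → E} (hf : Continuous f) {S : Set X}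
    {R K : ℝ} (h : ∀ x ∈ S, R ≤ ‖x‖ → ‖f x‖ ≤ K) : ∃ M, ∀ x ∈ S, ‖f x‖ ≤ M := by
  obtain ⟨B, hB⟩ := (isCompact_closedBall (0 : X) R).exists_bound_of_continuousOn hf.continuousOn
  refine ⟨max B K, fun x hx ↦ ?_⟩
  rcases le_total R ‖x‖ with hRx | hxR
  · exact (h x hx hRx).trans (le_max_right _ _)
  · exact (hB x (mem_closedBall_zero_iff.2 hxR)).trans (le_max_left _ _)

theorem Complex.arg_exp_of_im_mem_Ioc {w : ℂ} (h : w.im ∈ Set.Ioc (-Real.pi) Real.pi) :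
    arg (exp w) = w.im := by
  rw [arg_exp, toIocMod_eq_self]
  rwa [show -Real.pi + 2 * Real.pi = Real.pi by ring]

theorem Complex.exists_sq_eq_and_arg_mem_Icc {δ : ℝ} (hδ : δ ≤ Real.pi / 2) {z : ℂ} (hz : z ≠ 0)
    (harg : 2 * δ ≤ |arg z|) : ∃ ρ : ℂ, ρ ^ 2 = z ∧ arg ρ ∈ Set.Icc δ (Real.pi - δ) := by
  set ρ := exp (log z / 2)
  have hsq : ρ ^ 2 = z := by
    rw [← exp_nat_mul, Nat.cast_ofNat, mul_div_cancel₀ _ two_ne_zero, exp_log hz]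
  have hρ : arg ρ = arg z / 2 := by
    have him : (log z / 2).im = arg z / 2 := by rw [div_ofNat_im, log_im]
    have hmem : (log z / 2).im ∈ Set.Ioc (-Real.pi) Real.pi := by
      rw [him]; constructor <;> linarith [neg_pi_lt_arg z, arg_le_pi z]
    rw [arg_exp_of_im_mem_Ioc hmem, him]
  rcases le_or_gt 0 (arg z) with hz0 | hz0
  · rw [abs_of_nonneg hz0] at harg
    exact ⟨ρ, hsq, by rw [hρ]; constructor <;> linarith [arg_le_pi z]⟩
  · rw [abs_of_neg hz0] at harg
    have hρneg : arg (-ρ) = arg z / 2 + Real.pi := by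
      rw [arg_neg_eq_arg_add_pi_of_im_neg (arg_neg_iff.mp (by linarith)), hρ]
    exact ⟨-ρ, by rw [neg_sq, hsq], by rw [hρneg]; constructor <;> linarith [neg_pi_lt_arg z]⟩

section Sector

variable {E : Type*} [NormedAddCommGroup E] {F : ℂ → E} {A C : ℝ}

theorem isBigO_comp_exp_of_norm_le_exp_sqrt (hgrowth : ∀ z, ‖F z‖ ≤ C * Real.exp (A * √‖z‖))
    (l : Filter ℂ) :
    (fun w ↦ F (exp w)) =O[l] fun w ↦ Real.exp (|A| * Real.exp (1 / 2 * |w.re|)) := by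
  have hC : 0 ≤ C :=
    nonneg_of_mul_nonneg_left ((norm_nonneg _).trans (hgrowth 0)) (Real.exp_pos _)
  refine IsBigO.of_bound C (Eventually.of_forall fun w ↦ (hgrowth _).trans ?_)
  rw [Real.norm_eq_abs, Real.abs_exp, norm_exp, ← Real.exp_half]
  gcongr C * Real.exp ?_
  calc A * Real.exp (w.re / 2) ≤ |A| * Real.exp (w.re / 2) := by gcongr; exact le_abs_self A
    _ ≤ |A| * Real.exp (1 / 2 * |w.re|) := by
      gcongr
      linarith [le_abs_self w.re]

theorem norm_le_of_abs_arg_le [NormedSpace ℂ E] (hF : Differentiable ℂ F) {M β : ℝ}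
    (hβ0 : 0 < β) (hβ : β < Real.pi) (hgrowth : ∀ z, ‖F z‖ ≤ C * Real.exp (A * √‖z‖))
    (hbd : ∀ z ≠ 0, |arg z| = β → ‖F z‖ ≤ M) {z : ℂ} (hz : z ≠ 0) (harg : |arg z| ≤ β) :
    ‖F z‖ ≤ M := by
  have hstrip : ∀ w : ℂ, w.im = -β ∨ w.im = β → ‖(F ∘ exp) w‖ ≤ M := by
    intro w hw
    have hmem : w.im ∈ Set.Ioc (-Real.pi) Real.pi := by
      rcases hw with hw | hw <;> rw [hw] <;> constructor <;> linarith
    refine hbd _ (exp_ne_zero w) ?_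
    rw [arg_exp_of_im_mem_Ioc hmem]
    rcases hw with hw | hw <;> simp only [hw, abs_neg, abs_of_pos hβ0]
  rw [← exp_log hz]
  refine PhragmenLindelof.horizontal_strip (f := F ∘ exp) (hF.comp differentiable_exp).diffContOnCl
    ⟨1 / 2, ?_, |A|, isBigO_comp_exp_of_norm_le_exp_sqrt hgrowth _⟩
    (fun w hw ↦ hstrip w (.inl hw)) (fun w hw ↦ hstrip w (.inr hw)) ?_ ?_
  · rw [sub_neg_eq_add, lt_div_iff₀ (by linarith)]
    linarith
  · rw [log_im]; exact neg_le_of_abs_le harg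
  · rw [log_im]; exact le_of_abs_le harg

end Sector

theorem statement12_general
    (δ : ℝ) (hδ0 : 0 < δ) (hδ2 : δ < Real.pi / 2)
    (c : ℂ) (F : ℂ → ℂ) (hF : Differentiable ℂ F)
    (A C : ℝ)
    (hb : ∀ lam : ℂ, ‖F lam‖ ≤ C * Real.exp (A * Real.sqrt ‖lam‖))
    (hlim : ∀ ε > (0:ℝ), ∃ R > (0:ℝ), ∀ ρ : ℂ,
      δ ≤ ρ.arg → ρ.arg ≤ Real.pi - δ → R ≤ ‖ρ‖ → ‖F (ρ ^ 2) - c‖ ≤ ε) :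
    ∀ lam : ℂ, F lam = c := by
  obtain ⟨R, -, hR⟩ := hlim 1 one_pos
  obtain ⟨M, hM⟩ := Continuous.exists_forall_norm_le_of_norm_le_off_ball
    (f := fun ρ ↦ F (ρ ^ 2)) (hF.continuous.comp (continuous_pow 2))
    (S := arg ⁻¹' Set.Icc δ (Real.pi - δ)) (K := ‖c‖ + 1) fun ρ hρ hRρ ↦
      (norm_le_norm_add_norm_sub' _ c).trans (by linarith [hR ρ hρ.1 hρ.2 hRρ])
  have hsquares : ∀ z ≠ 0, 2 * δ ≤ |arg z| → ‖F z‖ ≤ M := by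
    intro z hz harg
    obtain ⟨ρ, rfl, hρ⟩ := exists_sq_eq_and_arg_mem_Icc hδ2.le hz harg
    exact hM ρ hρ
  have hbdd : ∀ z ≠ 0, ‖F z‖ ≤ M := fun z hz ↦ (le_total |arg z| (2 * δ)).elim
    (norm_le_of_abs_arg_le hF (by positivity) (by linarith) hb
      (fun w hw hwarg ↦ hsquares w hw hwarg.ge) hz)
    (hsquares z hz)
  have hconst : ∀ z w, F z = F w := hF.apply_eq_apply_of_bounded <|
    isBounded_iff_forall_norm_le.2 ⟨max M ‖F 0‖, by
      rintro _ ⟨z, rfl⟩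
      rcases eq_or_ne z 0 with rfl | hz
      exacts [le_max_right _ _, (hbdd z hz).trans (le_max_left _ _)]⟩
  intro lam
  refine eq_of_forall_dist_le fun ε hε ↦ ?_
  obtain ⟨R', hR'0, hR'⟩ := hlim ε hε
  have harg : arg (R' * I) = Real.pi / 2 := by rw [arg_real_mul _ hR'0, arg_I]
  rw [dist_eq_norm, hconst lam ((R' * I) ^ 2)]
  exact hR' _ (by linarith) (by linarith) (by simp [abs_of_pos hR'0])

/-- Phragmén–Lindelöf / Liouville lemma: an entire function `F`
of order at most `1/2` (growth `|F(λ)| ≤ C exp(A |λ|^{1/2})`) such that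
`F(ρ²) → c` as `|ρ| → ∞` in the sector `Λ_δ = {ρ : δ ≤ arg ρ ≤ π - δ}`,
`0 < δ < π/2`, is identically equal to `c`. -/
theorem statement12
    (δ : ℝ) (hδ0 : 0 < δ) (hδ2 : δ < Real.pi / 2)
    (c : ℂ) (F : ℂ → ℂ) (hF : Differentiable ℂ F)
    (A C : ℝ) (hA : 0 < A) (hC : 0 < C)
    (hb : ∀ lam : ℂ, ‖F lam‖ ≤ C * Real.exp (A * Real.sqrt ‖lam‖))
    (hlim : ∀ ε > (0:ℝ), ∃ R > (0:ℝ), ∀ ρ : ℂ,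
      δ ≤ ρ.arg → ρ.arg ≤ Real.pi - δ → R ≤ ‖ρ‖ → ‖F (ρ ^ 2) - c‖ ≤ ε) :
    ∀ lam : ℂ, F lam = c :=
  statement12_general δ hδ0 hδ2 c F hF A C hb hlim
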